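/- For any finite-alphabet sources with joint PMF P_{XY}, integer delay d with |d| ≤ n, and ρ ∈ [0,1], the Gallager function of the delayed product distribution factorizes as E_n^{(1)}(ρ, P_{X^n Y^n_{(d)}}) = E^{(1)}(ρ, P_{XY}) + (|d|/n)·(E^{(3)}(ρ, P_X) − E^{(1)}(ρ, P_{XY})), where E^{(1)}(ρ, P_{XY}) = log ∑_y (∑_x P_{XY}(x,y)^{1/(1+ρ)})^{1+ρ}, E^{(3)}(ρ, P_X) = log (∑_x P_X(x)^{1/(1+ρ)})^{1+ρ}, and E_n^{(1)}(ρ, R) = (1/n) log ∑_{y^n} (∑_{x^n} R(x^n,y^n)^{1/(1+ρ)})^{1+ρ}. -/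

import Mathlib

/-!
After reindexing the `x`- and the `y`-coordinates separately, the delayed distribution is a
product of `n` pair distributions: `|d|` copies of the independent coupling `P_X ⊗ P_Y` and
`n - |d|` copies of `P_{XY}`. The Gallager sum `∑_y (∑_x R(x,y)^{1/(1+ρ)})^{1+ρ}` is
multiplicative over such products, and for `P_X ⊗ P_Y` the factor `P_Y(y)` leaves the inner sum
with exponent `(1/(1+ρ))(1+ρ) = 1`, so that sum is `(∑_x P_X(x)^{1/(1+ρ)})^{1+ρ} · ∑_y P_Y(y)`.
The Gallager sum of the delayed distribution is therefore
`((∑_x P_X(x)^{1/(1+ρ)})^{1+ρ})^{|d|} · (∑_y (∑_x P_{XY}(x,y)^{1/(1+ρ)})^{1+ρ})^{n-|d|}`.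
-/

open Finset

/-- The delayed joint distribution `P_{X^n Y^n_{(d)}}`: for delay `d ≥ 0`, the first
`|d|` symbols of `x^n` are independent with law `P_X`, the pairs
`(x_{1+|d|},…,x_n)` and `(y_1,…,y_{n-|d|})` are jointly distributed according to
`P_{XY}`, and the last `|d|` symbols of `y^n` are independent with law `P_Y`;
symmetrically for `d < 0`. -/
noncomputable def delayedDist {𝒳 𝒴 : Type*} [Fintype 𝒳] [Fintype 𝒴]
    (PXY : 𝒳 × 𝒴 → ℝ) (n : ℕ) (d : ℤ) (hd : d.natAbs ≤ n) :
    ((Fin n → 𝒳) × (Fin n → 𝒴)) → ℝ := fun p =>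
  let k := d.natAbs
  let PX : 𝒳 → ℝ := fun a => ∑ b, PXY (a, b)
  let PY : 𝒴 → ℝ := fun b => ∑ a, PXY (a, b)
  if 0 ≤ d then
    (∏ i : Fin k, PX (p.1 (Fin.castLE hd i))) *
      (∏ i : Fin (n - k), PXY (p.1 (Fin.cast (Nat.add_sub_cancel' hd) (Fin.natAdd k i)),
        p.2 (Fin.castLE (Nat.sub_le n k) i))) *
      (∏ i : Fin k, PY (p.2 (Fin.cast (Nat.sub_add_cancel hd) (Fin.natAdd (n - k) i))))
  else
    (∏ i : Fin k, PX (p.1 (Fin.cast (Nat.sub_add_cancel hd) (Fin.natAdd (n - k) i)))) *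
      (∏ i : Fin (n - k), PXY (p.1 (Fin.castLE (Nat.sub_le n k) i),
        p.2 (Fin.cast (Nat.add_sub_cancel' hd) (Fin.natAdd k i)))) *
      (∏ i : Fin k, PY (p.2 (Fin.castLE hd i)))

section Gallager

variable {α β : Type*} [Fintype α] [Fintype β]

/-- `E^{(1)}(ρ, R) = log (gallagerSum ρ R)`. -/
noncomputable def gallagerSum (ρ : ℝ) (R : α × β → ℝ) : ℝ :=
  ∑ y, (∑ x, R (x, y) ^ (1 / (1 + ρ))) ^ (1 + ρ)

theorem gallagerSum_comp_prodMap {α' β' : Type*} [Fintype α'] [Fintype β'] (ρ : ℝ)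
    (R : α' × β' → ℝ) (e : α ≃ α') (f : β ≃ β') :
    gallagerSum ρ (R ∘ Prod.map e f) = gallagerSum ρ R :=
  Fintype.sum_equiv f _ _ fun _ =>
    congrArg (· ^ (1 + ρ)) (Fintype.sum_equiv e _ _ fun _ => rfl)

theorem gallagerSum_pi {ι : Type*} [Fintype ι] [DecidableEq ι] (ρ : ℝ) (R : ι → α × β → ℝ)
    (hR : ∀ i p, 0 ≤ R i p) :
    gallagerSum ρ (fun p : (ι → α) × (ι → β) => ∏ i, R i (p.1 i, p.2 i)) =
      ∏ i, gallagerSum ρ (R i) := by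
  unfold gallagerSum
  rw [Fintype.prod_sum]
  refine sum_congr rfl fun y _ => ?_
  simp_rw [← Real.finsetProd_rpow _ _ fun i _ => hR i _]
  rw [← Fintype.prod_sum fun i a => R i (a, y i) ^ (1 / (1 + ρ)),
    Real.finsetProd_rpow _ _ fun i _ => sum_nonneg fun a _ => Real.rpow_nonneg (hR i _) _]

theorem gallagerSum_mul_indep (ρ : ℝ) (hρ : 1 + ρ ≠ 0) (P : α → ℝ) (Q : β → ℝ)
    (hP : ∀ a, 0 ≤ P a) (hQ : ∀ b, 0 ≤ Q b) :
    gallagerSum ρ (fun p => P p.1 * Q p.2) = (∑ a, P a ^ (1 / (1 + ρ))) ^ (1 + ρ) * ∑ b, Q b := by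
  unfold gallagerSum
  rw [mul_sum]
  refine sum_congr rfl fun b _ => ?_
  simp_rw [Real.mul_rpow (hP _) (hQ b), ← sum_mul]
  rw [Real.mul_rpow (sum_nonneg fun a _ => Real.rpow_nonneg (hP a) _) (Real.rpow_nonneg (hQ b) _),
    ← Real.rpow_mul (hQ b), one_div_mul_cancel hρ, Real.rpow_one]

theorem gallagerSum_pos (ρ : ℝ) {R : α × β → ℝ} (hR : ∀ p, 0 ≤ R p) {p : α × β}
    (hp : 0 < R p) : 0 < gallagerSum ρ R := by
  refine sum_pos' (fun y _ => Real.rpow_nonneg (sum_nonneg fun x _ =>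
    Real.rpow_nonneg (hR _) _) _) ⟨p.2, mem_univ _, Real.rpow_pos_of_pos ?_ _⟩
  exact sum_pos' (fun x _ => Real.rpow_nonneg (hR _) _)
    ⟨p.1, mem_univ _, Real.rpow_pos_of_pos hp _⟩

end Gallager

section Delayed

variable {𝒳 𝒴 : Type*} [Fintype 𝒳] [Fintype 𝒴]

/-- `inl` coordinates: the `|d|` pairs decoupled by the delay; `inr` coordinates: the
`n - |d|` pairs still coupled by `P_{XY}`. -/
noncomputable def delayedBlock (PXY : 𝒳 × 𝒴 → ℝ) (k m : ℕ) : Fin k ⊕ Fin m → 𝒳 × 𝒴 → ℝ :=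
  Sum.elim (fun _ p => (∑ b, PXY (p.1, b)) * ∑ a, PXY (a, p.2)) fun _ => PXY

theorem delayedDist_eq_prod_delayedBlock (PXY : 𝒳 × 𝒴 → ℝ) {n : ℕ} {d : ℤ}
    (hd : d.natAbs ≤ n) :
    ∃ ex ey : Fin d.natAbs ⊕ Fin (n - d.natAbs) ≃ Fin n, ∀ x y,
      delayedDist PXY n d hd (x, y) =
        ∏ i, delayedBlock PXY _ _ i (x (ex i), y (ey i)) := by
  have hprod : ∀ (ex ey : Fin d.natAbs ⊕ Fin (n - d.natAbs) ≃ Fin n) (x : Fin n → 𝒳)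
      (y : Fin n → 𝒴), ∏ i, delayedBlock PXY _ _ i (x (ex i), y (ey i)) =
        (∏ i, ∑ b, PXY (x (ex (.inl i)), b)) *
          (∏ j, PXY (x (ex (.inr j)), y (ey (.inr j)))) *
          ∏ i, ∑ a, PXY (a, y (ey (.inl i))) := by
    intro ex ey x y
    simp only [Fintype.prod_sum_type, delayedBlock, Sum.elim_inl, Sum.elim_inr, prod_mul_distrib]
    ring
  let front : Fin d.natAbs ⊕ Fin (n - d.natAbs) ≃ Fin n :=
    finSumFinEquiv.trans (finCongr (Nat.add_sub_cancel' hd))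
  let back : Fin d.natAbs ⊕ Fin (n - d.natAbs) ≃ Fin n :=
    (Equiv.sumComm _ _).trans (finSumFinEquiv.trans (finCongr (Nat.sub_add_cancel hd)))
  -- the index maps in `delayedDist` are `front` and `back` definitionally
  by_cases hd0 : 0 ≤ d
  · refine ⟨front, back, fun x y => ?_⟩
    rw [hprod, delayedDist, if_pos hd0]
    rfl
  · refine ⟨back, front, fun x y => ?_⟩
    rw [hprod, delayedDist, if_neg hd0]
    rfl

theorem gallagerSum_delayedDist (ρ : ℝ) (hρ : 1 + ρ ≠ 0) (PXY : 𝒳 × 𝒴 → ℝ)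
    (hP0 : ∀ p, 0 ≤ PXY p) (hP1 : ∑ p, PXY p = 1) {n : ℕ} {d : ℤ} (hd : d.natAbs ≤ n) :
    gallagerSum ρ (delayedDist PXY n d hd) =
      ((∑ a, (∑ b, PXY (a, b)) ^ (1 / (1 + ρ))) ^ (1 + ρ)) ^ d.natAbs *
        gallagerSum ρ PXY ^ (n - d.natAbs) := by
  obtain ⟨ex, ey, hdist⟩ := delayedDist_eq_prod_delayedBlock PXY hd
  have hblock : ∀ i p, 0 ≤ delayedBlock PXY d.natAbs (n - d.natAbs) i p := by
    rintro (i | j) p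
    · exact mul_nonneg (sum_nonneg fun _ _ => hP0 _) (sum_nonneg fun _ _ => hP0 _)
    · exact hP0 p
  have hPY : ∑ b, ∑ a, PXY (a, b) = 1 := by rw [← hP1, Fintype.sum_prod_type_right]
  have hreindex : delayedDist PXY n d hd =
      (fun p : (_ → 𝒳) × (_ → 𝒴) => ∏ i, delayedBlock PXY _ _ i (p.1 i, p.2 i)) ∘
        Prod.map (ex.arrowCongr (.refl 𝒳)).symm (ey.arrowCongr (.refl 𝒴)).symm := by
    funext ⟨x, y⟩
    simp [hdist]
  rw [hreindex, gallagerSum_comp_prodMap, gallagerSum_pi _ _ hblock, Fintype.prod_sum_type]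
  simp only [delayedBlock, Sum.elim_inl, Sum.elim_inr, prod_const, card_univ, Fintype.card_fin]
  rw [gallagerSum_mul_indep ρ hρ (fun a => ∑ b, PXY (a, b)) (fun b => ∑ a, PXY (a, b))
    (fun _ => sum_nonneg fun _ _ => hP0 _) (fun _ => sum_nonneg fun _ _ => hP0 _), hPY,
    mul_one]

end Delayed

theorem gallager_delayed_factorization_general {𝒳 𝒴 : Type*} [Fintype 𝒳] [Fintype 𝒴]
    (PXY : 𝒳 × 𝒴 → ℝ)
    (hP0 : ∀ p, 0 ≤ PXY p) (hP1 : ∑ p, PXY p = 1)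
    (n : ℕ) (hn : 0 < n) (d : ℤ) (hd : d.natAbs ≤ n)
    (ρ : ℝ) (hρ0 : 0 ≤ ρ) :
    (1 / n : ℝ) * Real.log (∑ y : Fin n → 𝒴, (∑ x : Fin n → 𝒳,
        delayedDist PXY n d hd (x, y) ^ (1 / (1 + ρ))) ^ (1 + ρ)) =
      Real.log (∑ y, (∑ x, PXY (x, y) ^ (1 / (1 + ρ))) ^ (1 + ρ)) +
        ((d.natAbs : ℝ) / n) *
          (Real.log ((∑ x, (∑ y, PXY (x, y)) ^ (1 / (1 + ρ))) ^ (1 + ρ)) -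
            Real.log (∑ y, (∑ x, PXY (x, y) ^ (1 / (1 + ρ))) ^ (1 + ρ))) := by
  have hρ : 1 + ρ ≠ 0 := by linarith
  obtain ⟨p, hp⟩ : ∃ p, 0 < PXY p := by
    by_contra! h
    have : ∑ p, PXY p = 0 := sum_eq_zero fun p _ => le_antisymm (h p) (hP0 p)
    linarith
  have hPXY : 0 < gallagerSum ρ PXY := gallagerSum_pos ρ hP0 hp
  have hPX : 0 < (∑ a, (∑ b, PXY (a, b)) ^ (1 / (1 + ρ))) ^ (1 + ρ) :=
    Real.rpow_pos_of_pos (sum_pos' (fun a _ => Real.rpow_nonneg (sum_nonneg fun b _ => hP0 _) _)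
      ⟨p.1, mem_univ _, Real.rpow_pos_of_pos
        (hp.trans_le (single_le_sum (fun b _ => hP0 (p.1, b)) (mem_univ p.2))) _⟩) _
  have key := gallagerSum_delayedDist ρ hρ PXY hP0 hP1 hd
  unfold gallagerSum at key hPXY
  rw [key, Real.log_mul (pow_pos hPX _).ne' (pow_pos hPXY _).ne', Real.log_pow, Real.log_pow,
    Nat.cast_sub hd]
  field_simp
  ring

/-- The Gallager function of the delayed product distribution factorizes:
`E_n^{(1)}(ρ, P_{X^n Y^n_{(d)}}) = E^{(1)}(ρ, P_{XY}) + (|d|/n)(E^{(3)}(ρ, P_X) − E^{(1)}(ρ, P_{XY}))`. -/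
theorem gallager_delayed_factorization {𝒳 𝒴 : Type*} [Fintype 𝒳] [Fintype 𝒴]
    [Nonempty 𝒳] [Nonempty 𝒴] (PXY : 𝒳 × 𝒴 → ℝ)
    (hP0 : ∀ p, 0 ≤ PXY p) (hP1 : ∑ p, PXY p = 1)
    (n : ℕ) (hn : 0 < n) (d : ℤ) (hd : d.natAbs ≤ n)
    (ρ : ℝ) (hρ0 : 0 ≤ ρ) (hρ1 : ρ ≤ 1) :
    (1 / n : ℝ) * Real.log (∑ y : Fin n → 𝒴, (∑ x : Fin n → 𝒳,
        delayedDist PXY n d hd (x, y) ^ (1 / (1 + ρ))) ^ (1 + ρ)) =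
      Real.log (∑ y, (∑ x, PXY (x, y) ^ (1 / (1 + ρ))) ^ (1 + ρ)) +
        ((d.natAbs : ℝ) / n) *
          (Real.log ((∑ x, (∑ y, PXY (x, y)) ^ (1 / (1 + ρ))) ^ (1 + ρ)) -
            Real.log (∑ y, (∑ x, PXY (x, y) ^ (1 / (1 + ρ))) ^ (1 + ρ))) :=
  gallager_delayed_factorization_general PXY hP0 hP1 n hn d hd ρ hρ0
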